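/- arXiv:2410.13450 — 2 statements merged into one kernel-verified Lean document; each statement's English description precedes it below -/
import Mathlib

section
/- Let f be a real polynomial in three variables u, x, y such that f(u,x,y) = f(u,y,x) for all real u, x, y. Then there exist m ∈ ℕ, univariate real polynomials λ_1, …, λ_m and univariate real polynomials g_1, …, g_m such that f(u,x,y) = Σ_{j=1}^m λ_j(u) · g_j(x) · g_j(y) for all real u, x, y. -/
/-- **Proposition 4 of the paper.** A real polynomial in three variables `u, x, y`
that is symmetric in `x` and `y` can be written as a finite sum
`Σ_j λ_j(u) g_j(x) g_j(y)` with univariate polynomials `λ_j, g_j`. -/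
theorem symmetric_polynomial_decomposition_dim_one
    (f : MvPolynomial (Fin 3) ℝ)
    (hsym : ∀ u x y : ℝ,
      MvPolynomial.eval ![u, x, y] f = MvPolynomial.eval ![u, y, x] f) :
    ∃ (m : ℕ) (lam g : Fin m → Polynomial ℝ),
      ∀ u x y : ℝ,
        MvPolynomial.eval ![u, x, y] f
          = ∑ j : Fin m, (lam j).eval u * (g j).eval x * (g j).eval y := by
  classical
  set ι := f.support × Fin 3 with hι
  set lamF : ι → Polynomial ℝ := fun p =>
    ![Polynomial.C (f.coeff p.1 / 2) * Polynomial.X ^ (p.1.1 0),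
      -(Polynomial.C (f.coeff p.1 / 2) * Polynomial.X ^ (p.1.1 0)),
      -(Polynomial.C (f.coeff p.1 / 2) * Polynomial.X ^ (p.1.1 0))] p.2 with hlamF
  set gF : ι → Polynomial ℝ := fun p =>
    ![Polynomial.X ^ (p.1.1 1) + Polynomial.X ^ (p.1.1 2),
      Polynomial.X ^ (p.1.1 1),
      Polynomial.X ^ (p.1.1 2)] p.2 with hgF
  obtain e := (Fintype.equivFin ι).symm
  refine ⟨Fintype.card ι, lamF ∘ e, gF ∘ e, ?_⟩
  intro u x y
  have hsum : ∑ j : Fin (Fintype.card ι),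
      ((lamF ∘ e) j).eval u * ((gF ∘ e) j).eval x * ((gF ∘ e) j).eval y
      = ∑ i : ι, (lamF i).eval u * (gF i).eval x * (gF i).eval y := by
    exact Fintype.sum_equiv e _ _ (fun j => rfl)
  rw [hsum]
  have hprod : ∑ i : ι, (lamF i).eval u * (gF i).eval x * (gF i).eval y
      = ∑ d : f.support, ∑ k : Fin 3,
          (lamF (d, k)).eval u * (gF (d, k)).eval x * (gF (d, k)).eval y := by
    exact Fintype.sum_prod_type
      (f := fun p => (lamF p).eval u * (gF p).eval x * (gF p).eval y)
  rw [hprod]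
  have hhalf : MvPolynomial.eval ![u, x, y] f
      = (MvPolynomial.eval ![u, x, y] f + MvPolynomial.eval ![u, y, x] f) / 2 := by
    rw [← hsym u x y]; ring
  rw [hhalf, MvPolynomial.eval_eq', MvPolynomial.eval_eq', ← Finset.sum_add_distrib,
    Finset.sum_div, ← Finset.sum_coe_sort]
  refine Finset.sum_congr rfl ?_
  intro d _
  rw [Fin.sum_univ_three, Fin.prod_univ_three, Fin.prod_univ_three]
  simp only [hlamF, hgF, Fin.prod_univ_three]
  simp [Matrix.cons_val_zero, Matrix.cons_val_one, Matrix.head_cons]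
  ring
end

section
/- Let (φ_k)_{k≥0} be a sequence of continuously differentiable functions φ_k : ℝ → ℝ with φ_0 ≡ 1, sup_x |φ_k(x)| ≤ 1 for all k, and let (q_k)_{k≥0} be real numbers with q_0 = 1, q_k ≥ 1, and q_k ≥ (sup_x |φ_k'(x)|)² for all k. For a finite Borel measure μ on ℝ define ‖μ‖ := (Σ_{k=0}^∞ 2^{−k} q_k^{−1} (∫_ℝ φ_k dμ)²)^{1/2}. Then for every real p ≥ 1, one has 2p · ‖μ‖^{2p−2} · Σ_{k=0}^∞ 2^{−k} q_k^{−1} (∫_ℝ φ_k dμ)(∫_ℝ φ_k' dμ) ≤ 4p · (1 + ‖μ‖^{2p}). -/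
/-! The norm dominates the total mass: the `k = 0` term of `‖μ‖²` is `μ(ℝ)²`. On the other hand,
with `m = μ(ℝ)`, `|∫ φ_k dμ| ≤ m` and `|∫ φ_k' dμ| ≤ √q_k m`, so the `k`-th term of the cross sum is
at most `2^{-k} m² / √q_k ≤ 2^{-k} m²`; summing, the cross sum is at most `2 m² ≤ 2 ‖μ‖²`, and
`2p ‖μ‖^{2p-2} · 2 ‖μ‖² = 4p ‖μ‖^{2p}`. -/

open MeasureTheory

lemma sq_integral_le_of_sq_le {α : Type*} [MeasurableSpace α] {μ : Measure α} [IsFiniteMeasure μ]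
    {f : α → ℝ} {c : ℝ} (hf : ∀ x, f x ^ 2 ≤ c) :
    (∫ x, f x ∂μ) ^ 2 ≤ c * μ.real Set.univ ^ 2 := by
  rcases isEmpty_or_nonempty α with hα | ⟨⟨x₀⟩⟩
  · simp [integral_of_isEmpty, Set.univ_eq_empty_iff.2 hα]
  have hc : 0 ≤ c := (sq_nonneg _).trans (hf x₀)
  have h := norm_integral_le_of_norm_le_const (μ := μ) (f := f)
    (.of_forall fun x => Real.abs_le_sqrt (hf x))
  calc (∫ x, f x ∂μ) ^ 2 = |∫ x, f x ∂μ| ^ 2 := (sq_abs _).symm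
    _ ≤ (√c * μ.real Set.univ) ^ 2 := by gcongr; exact h
    _ = c * μ.real Set.univ ^ 2 := by rw [mul_pow, Real.sq_sqrt hc]

lemma abs_inv_mul_mul_le_sq {a b q m : ℝ} (hq : 1 ≤ q) (ha : |a| ≤ m) (hb : b ^ 2 ≤ q * m ^ 2) :
    |q⁻¹ * a * b| ≤ m ^ 2 := by
  refine abs_le_of_sq_le_sq ?_ (sq_nonneg m)
  have ha2 : a ^ 2 ≤ m ^ 2 := sq_le_sq' (neg_le_of_abs_le ha) (le_of_abs_le ha)
  calc (q⁻¹ * a * b) ^ 2 = q⁻¹ ^ 2 * (a ^ 2 * b ^ 2) := by ring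
    _ ≤ q⁻¹ ^ 2 * (m ^ 2 * (q * m ^ 2)) := by gcongr
    _ = q⁻¹ * (m ^ 2) ^ 2 := by field_simp
    _ ≤ (m ^ 2) ^ 2 := mul_le_of_le_one_left (by positivity) (inv_le_one_of_one_le₀ hq)

lemma sq_le_mul_sq_of_abs_le {a q m : ℝ} (hq : 1 ≤ q) (ha : |a| ≤ m) : a ^ 2 ≤ q * m ^ 2 :=
  (sq_le_sq' (neg_le_of_abs_le ha) (le_of_abs_le ha)).trans
    (le_mul_of_one_le_left (sq_nonneg m) hq)

lemma summable_of_abs_le_geometric_two {f : ℕ → ℝ} {C : ℝ} (hf : ∀ k, |f k| ≤ 1 / 2 ^ k * C) :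
    Summable f :=
  .of_norm_bounded (by simpa only [one_div_pow] using summable_geometric_two.mul_right C) hf

lemma tsum_one_div_two_pow_mul (C : ℝ) : ∑' k : ℕ, 1 / 2 ^ k * C = 2 * C := by
  rw [tsum_mul_right]
  simpa only [one_div_pow] using congrArg (· * C) tsum_geometric_two

section WeightedSums

variable {a b q : ℕ → ℝ} {m : ℝ}

lemma abs_weighted_mul_le (hq : ∀ k, 1 ≤ q k) (ha : ∀ k, |a k| ≤ m)
    (hb : ∀ k, b k ^ 2 ≤ q k * m ^ 2) (k : ℕ) :
    |1 / 2 ^ k * (q k)⁻¹ * a k * b k| ≤ 1 / 2 ^ k * m ^ 2 := by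
  rw [mul_assoc, mul_assoc, abs_mul, abs_of_pos (by positivity), ← mul_assoc]
  gcongr
  exact abs_inv_mul_mul_le_sq (hq k) (ha k) (hb k)

lemma summable_weighted_mul (hq : ∀ k, 1 ≤ q k) (ha : ∀ k, |a k| ≤ m)
    (hb : ∀ k, b k ^ 2 ≤ q k * m ^ 2) :
    Summable fun k => 1 / 2 ^ k * (q k)⁻¹ * a k * b k :=
  summable_of_abs_le_geometric_two (abs_weighted_mul_le hq ha hb)

lemma summable_weighted_sq (hq : ∀ k, 1 ≤ q k) (ha : ∀ k, |a k| ≤ m) :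
    Summable fun k => 1 / 2 ^ k * (q k)⁻¹ * a k ^ 2 := by
  simpa only [mul_assoc, sq] using summable_weighted_mul hq ha
    fun k => sq_le_mul_sq_of_abs_le (hq k) (ha k)

lemma sq_le_tsum_weighted_sq (hq : ∀ k, 1 ≤ q k) (ha : ∀ k, |a k| ≤ m) (hq0 : q 0 = 1)
    (ha0 : a 0 = m) : m ^ 2 ≤ ∑' k, 1 / 2 ^ k * (q k)⁻¹ * a k ^ 2 := by
  have h := (summable_weighted_sq hq ha).le_tsum 0 fun k _ =>
    mul_nonneg (mul_nonneg (by positivity) (inv_nonneg.2 (zero_le_one.trans (hq k)))) (sq_nonneg _)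
  simpa [hq0, ha0] using h

lemma tsum_weighted_mul_le (hq : ∀ k, 1 ≤ q k) (ha : ∀ k, |a k| ≤ m)
    (hb : ∀ k, b k ^ 2 ≤ q k * m ^ 2) :
    ∑' k, 1 / 2 ^ k * (q k)⁻¹ * a k * b k ≤ 2 * m ^ 2 := by
  rw [← tsum_one_div_two_pow_mul]
  exact (summable_weighted_mul hq ha hb).tsum_le_tsum
    (fun k => (le_abs_self _).trans (abs_weighted_mul_le hq ha hb k))
    (summable_of_abs_le_geometric_two fun k => (abs_of_nonneg (by positivity)).le)

end WeightedSums

lemma mul_rpow_sub_two_mul_le {N T p : ℝ} (hN : 0 ≤ N) (hp : 1 ≤ p) (hT : T ≤ 2 * N ^ 2) :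
    2 * p * N ^ (2 * p - 2) * T ≤ 4 * p * (1 + N ^ (2 * p)) := by
  have hpow : N ^ (2 * p - 2) * N ^ 2 = N ^ (2 * p) := by
    rw [← Real.rpow_natCast, ← Real.rpow_add' hN (by push_cast; linarith)]
    push_cast
    ring_nf
  have hp0 : 0 ≤ p := zero_le_one.trans hp
  calc 2 * p * N ^ (2 * p - 2) * T ≤ 2 * p * N ^ (2 * p - 2) * (2 * N ^ 2) := by gcongr
    _ = 4 * p * N ^ (2 * p) := by rw [← hpow]; ring
    _ ≤ 4 * p * (1 + N ^ (2 * p)) := by gcongr; linarith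

theorem derivative_estimate_for_psi_general
    (φ : ℕ → ℝ → ℝ) (q : ℕ → ℝ)
    (hφ0 : ∀ x : ℝ, φ 0 x = 1)
    (hφbd : ∀ k, ∀ x : ℝ, |φ k x| ≤ 1)
    (hq0 : q 0 = 1)
    (hq1 : ∀ k, 1 ≤ q k)
    (hq2 : ∀ k, ∀ x : ℝ, (deriv (φ k) x) ^ 2 ≤ q k)
    (μ : Measure ℝ) [IsFiniteMeasure μ]
    (p : ℝ) (hp : 1 ≤ p) :
    2 * p
        * Real.sqrt (∑' k : ℕ, (1 / 2 ^ k) * (q k)⁻¹ * (∫ x, φ k x ∂μ) ^ 2)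
            ^ (2 * p - 2)
        * (∑' k : ℕ,
            (1 / 2 ^ k) * (q k)⁻¹ * (∫ x, φ k x ∂μ) * (∫ x, deriv (φ k) x ∂μ))
      ≤ 4 * p
          * (1 + Real.sqrt (∑' k : ℕ, (1 / 2 ^ k) * (q k)⁻¹ * (∫ x, φ k x ∂μ) ^ 2)
                ^ (2 * p)) := by
  set m := μ.real Set.univ
  have ha : ∀ k, |∫ x, φ k x ∂μ| ≤ m := fun k => by
    simpa using norm_integral_le_of_norm_le_const (μ := μ) (f := φ k) (.of_forall (hφbd k))
  have ha0 : ∫ x, φ 0 x ∂μ = m := by simp [hφ0, m]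
  have hb : ∀ k, (∫ x, deriv (φ k) x ∂μ) ^ 2 ≤ q k * m ^ 2 := fun k =>
    sq_integral_le_of_sq_le (hq2 k)
  have hS := sq_le_tsum_weighted_sq hq1 ha hq0 ha0
  refine mul_rpow_sub_two_mul_le (Real.sqrt_nonneg _) hp ?_
  rw [Real.sq_sqrt ((sq_nonneg m).trans hS)]
  linarith [tsum_weighted_mul_le hq1 ha hb]

/-- The estimate `∫ ∂_x (δψ/δμ)(μ,x) μ(dx) ≤ 4p · ψ(μ)` for `ψ(μ) = 1 + ‖μ‖^{2p}`
from the comparison theorem of Section 5, where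
`‖μ‖ := (Σ_k 2^{-k} q_k^{-1} (∫ φ_k dμ)²)^{1/2}`. -/
theorem derivative_estimate_for_psi
    (φ : ℕ → ℝ → ℝ) (q : ℕ → ℝ)
    (hφdiff : ∀ k, ContDiff ℝ 1 (φ k))
    (hφ0 : ∀ x : ℝ, φ 0 x = 1)
    (hφbd : ∀ k, ∀ x : ℝ, |φ k x| ≤ 1)
    (hq0 : q 0 = 1)
    (hq1 : ∀ k, 1 ≤ q k)
    (hq2 : ∀ k, ∀ x : ℝ, (deriv (φ k) x) ^ 2 ≤ q k)
    (μ : Measure ℝ) [IsFiniteMeasure μ]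
    (p : ℝ) (hp : 1 ≤ p) :
    2 * p
        * Real.sqrt (∑' k : ℕ, (1 / 2 ^ k) * (q k)⁻¹ * (∫ x, φ k x ∂μ) ^ 2)
            ^ (2 * p - 2)
        * (∑' k : ℕ,
            (1 / 2 ^ k) * (q k)⁻¹ * (∫ x, φ k x ∂μ) * (∫ x, deriv (φ k) x ∂μ))
      ≤ 4 * p
          * (1 + Real.sqrt (∑' k : ℕ, (1 / 2 ^ k) * (q k)⁻¹ * (∫ x, φ k x ∂μ) ^ 2)
                ^ (2 * p)) :=
  derivative_estimate_for_psi_general φ q hφ0 hφbd hq0 hq1 hq2 μ p hp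
end
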